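/- arXiv:2304.05185 — 3 statements merged into one kernel-verified Lean document; each statement's English description precedes it below -/
import Mathlib

section
/- Let (X,d) be a compact metric space and r₁ > 0. Then there are only finitely many values c > r₁ at which the partition of X into ∼_c-equivalence classes changes; equivalently, the set of scales c > r₁ such that for every ε > 0 the relations ∼_{c-ε'} and ∼_{c+ε'} differ for some 0 < ε' < ε is finite. Consequently, the set of such critical scales of the zero-dimensional persistence of X has no accumulation point other than possibly 0. -/
/-!
Write `N(c)` for the number of `∼_c`-classes. For `c > 0` it is finite, since the class of `x`
contains the ball of radius `c` about `x` and finitely many such balls cover `X`; and it is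
antitone, since `∼_c` refines `∼_{c'}` for `c ≤ c'`. If `c` is critical, some pair of points is
`∼_{c+ε'}`-related but not `∼_{c-ε'}`-related, so `N(c') < N(s)` whenever `s < c < c'`. Hence
`c ↦ min {N(s) | r₁ < s < c}` is strictly antitone on the critical scales above `r₁` and takes
values at most `N(r₁)`, so there are at most `N(r₁) + 1` of them.
-/

open Set

namespace Setoid

variable {α : Type*} {s t : Setoid α}

lemma map_of_le_surjective (h : s ≤ t) : Function.Surjective (map_of_le h) :=
  Quotient.ind fun x => ⟨Quotient.mk s x, rfl⟩

lemma card_quotient_le_of_le [Finite (Quotient s)] (h : s ≤ t) :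
    Nat.card (Quotient t) ≤ Nat.card (Quotient s) :=
  Nat.card_le_card_of_surjective _ (map_of_le_surjective h)

lemma card_quotient_lt_of_le [Finite (Quotient s)] (h : s ≤ t) {x y : α} (hxy : t x y)
    (hnxy : ¬ s x y) : Nat.card (Quotient t) < Nat.card (Quotient s) := by
  by_contra! hcard
  have hinj := ((map_of_le_surjective h).bijective_of_nat_card_le hcard).injective
  exact hnxy (Quotient.exact (hinj (Quotient.sound hxy : Quotient.mk t x = Quotient.mk t y)))

end Setoid

lemma finite_setOf_strict_drop_across {α : Type*} [LinearOrder α] [DenselyOrdered α]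
    (f : α → ℕ) (r : α) (N : ℕ) (hN : ∀ s, r < s → f s ≤ N) :
    {c | r < c ∧ ∀ s c', r < s → s < c → c < c' → f c' < f s}.Finite := by
  set g : α → ℕ := fun c => sInf (f '' Ioo r c)
  have hg_mem : ∀ c, r < c → ∃ s ∈ Ioo r c, f s = g c := fun c hc =>
    Nat.sInf_mem ((nonempty_Ioo.2 hc).image f)
  have hg_anti : StrictAntiOn g {c | r < c ∧ ∀ s c', r < s → s < c → c < c' → f c' < f s} := by
    rintro c ⟨hrc, hdrop⟩ d - hcd
    obtain ⟨s, hs, hfs⟩ := hg_mem c hrc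
    obtain ⟨t, hct, htd⟩ := exists_between hcd
    calc g d ≤ f t := Nat.sInf_le ⟨t, ⟨hrc.trans hct, htd⟩, rfl⟩
      _ < f s := hdrop s t hs.1 hs.2 hct
      _ = g c := hfs
  refine Finite.of_finite_image ((finite_Iic N).subset ?_) hg_anti.injOn
  rintro _ ⟨c, ⟨hrc, -⟩, rfl⟩
  obtain ⟨s, hs, hfs⟩ := hg_mem c hrc
  exact hfs ▸ hN s hs.1

section ChainRelation

variable {X : Type*} [PseudoMetricSpace X]

def chainSetoid (X : Type*) [PseudoMetricSpace X] (c : ℝ) : Setoid X :=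
  Relation.EqvGen.setoid fun u v : X => dist u v < c

noncomputable def chainClassCount (X : Type*) [PseudoMetricSpace X] (c : ℝ) : ℕ :=
  Nat.card (Quotient (chainSetoid X c))

def IsCriticalScale (X : Type*) [PseudoMetricSpace X] (c : ℝ) : Prop :=
  ∀ ε > 0, ∃ ε' : ℝ, 0 < ε' ∧ ε' < ε ∧
    (fun a b : X => Relation.EqvGen (fun u v : X => dist u v < c - ε') a b) ≠
    (fun a b : X => Relation.EqvGen (fun u v : X => dist u v < c + ε') a b)

lemma chainSetoid_mono : Monotone (chainSetoid X) := fun _ _ h =>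
  Relation.EqvGen.mono fun _ _ huv => huv.trans_le h

lemma finite_quotient_chainSetoid [CompactSpace X] {c : ℝ} (hc : 0 < c) :
    Finite (Quotient (chainSetoid X c)) := by
  obtain ⟨t, -, ht, hcover⟩ := finite_cover_balls_of_compact (isCompact_univ (X := X)) hc
  have : Finite t := ht
  refine Finite.of_surjective (fun x : t => Quotient.mk (chainSetoid X c) x) ?_
  refine Quotient.ind fun x => ?_
  obtain ⟨y, hy, hxy⟩ := mem_iUnion₂.1 (hcover (mem_univ x))
  exact ⟨⟨y, hy⟩, Quotient.sound (Relation.EqvGen.rel _ _ (Metric.mem_ball'.1 hxy))⟩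

lemma chainClassCount_le [CompactSpace X] {c c' : ℝ} (hc : 0 < c) (h : c ≤ c') :
    chainClassCount X c' ≤ chainClassCount X c :=
  have := finite_quotient_chainSetoid (X := X) hc
  Setoid.card_quotient_le_of_le (chainSetoid_mono h)

lemma exists_chain_of_isCriticalScale {c ε : ℝ} (hc : IsCriticalScale X c) (hε : 0 < ε) :
    ∃ x y : X, chainSetoid X (c + ε) x y ∧ ¬ chainSetoid X (c - ε) x y := by
  obtain ⟨ε', hε'0, hε'ε, hne⟩ := hc ε hε
  by_contra! h
  refine hne (funext₂ fun x y => propext ⟨fun hxy => chainSetoid_mono (by linarith) hxy,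
    fun hxy => ?_⟩)
  exact chainSetoid_mono (by linarith) (h x y (chainSetoid_mono (by linarith) hxy))

lemma chainClassCount_lt_of_isCriticalScale [CompactSpace X] {s c c' : ℝ}
    (hc : IsCriticalScale X c) (hs : 0 < s) (hsc : s < c) (hcc' : c < c') :
    chainClassCount X c' < chainClassCount X s := by
  have := finite_quotient_chainSetoid (X := X) hs
  obtain ⟨x, y, hxy, hnxy⟩ := exists_chain_of_isCriticalScale hc (lt_min (sub_pos.2 hsc)
    (sub_pos.2 hcc'))
  exact Setoid.card_quotient_lt_of_le (chainSetoid_mono (hsc.trans hcc').le)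
    (chainSetoid_mono (by linarith [min_le_right (c - s) (c' - c)]) hxy)
    fun h => hnxy (chainSetoid_mono (by linarith [min_le_left (c - s) (c' - c)]) h)

end ChainRelation

/-- For a compact metric space and `r₁ > 0`, the set of scales `c > r₁`
at which the partition of `X` into `∼`-classes changes (i.e. the chain relation is not
constant on any open interval around `c`) is finite. -/
theorem stmt_3 {X : Type*} [MetricSpace X] [CompactSpace X] (r₁ : ℝ) (hr₁ : 0 < r₁) :
    {c : ℝ | r₁ < c ∧ ∀ ε > 0, ∃ ε' : ℝ, 0 < ε' ∧ ε' < ε ∧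
      (fun a b : X => Relation.EqvGen (fun u v : X => dist u v < c - ε') a b) ≠
      (fun a b : X => Relation.EqvGen (fun u v : X => dist u v < c + ε') a b)}.Finite := by
  refine (finite_setOf_strict_drop_across (chainClassCount X) r₁ (chainClassCount X r₁)
    fun s hs => chainClassCount_le hr₁ hs.le).subset ?_
  rintro c ⟨hrc, hcrit⟩
  exact ⟨hrc, fun s c' hrs hsc hcc' =>
    chainClassCount_lt_of_isCriticalScale hcrit (hr₁.trans hrs) hsc hcc'⟩
end

section
/- Let (X,d) be a compact metric space, r > 0, and let x, y ∈ X with d(x,y) < r. Choose ν with 0 < ν < r − d(x,y). Suppose c > 0 is the only local minimum of the distance function d in the interval [c, r). Then (x,y) ν-descends to a pair (x', y') with d(x', y') ≤ c; that is, there exist finite sequences x = x₁, …, x_p = x' and y = y₁, …, y_p = y' in X with d(x_j, x_{j+1}) < ν, d(y_j, y_{j+1}) < ν, d(x_j, y_j) ≤ d(x,y) for all j, and d(x', y') ≤ c. -/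
/-- The pair `(x, y)` ν-descends to `(x', y')`: there are equal-length finite ν-chains
from `x` to `x'` and from `y` to `y'` whose corresponding points are always at distance
at most `dist x y`. -/
def Descends {X : Type*} [MetricSpace X] (ν : ℝ) (x y x' y' : X) : Prop :=
  ∃ (p : ℕ) (f g : Fin (p + 1) → X),
    f 0 = x ∧ g 0 = y ∧ f (Fin.last p) = x' ∧ g (Fin.last p) = y' ∧
    (∀ i : Fin p, dist (f i.castSucc) (f i.succ) < ν) ∧
    (∀ i : Fin p, dist (g i.castSucc) (g i.succ) < ν) ∧
    (∀ i : Fin (p + 1), dist (f i) (g i) ≤ dist x y)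

/-- `m` is a local minimum value of the distance function of `X`: it is attained at a
pair `(a, b)` and `d ≥ m` on a neighborhood of `(a, b)` in `X × X`. -/
def IsLocMinVal (X : Type*) [MetricSpace X] (m : ℝ) : Prop :=
  ∃ a b : X, dist a b = m ∧
    ∃ ε > 0, ∀ a' b' : X, dist a a' < ε → dist b b' < ε → m ≤ dist a' b'

/-!
The pairs to which `(x, y)` ν-descends form a closed, hence compact, subset of `X × X`:
a limit of such pairs is within `ν` of one of them, so it is reached by one more step.
A pair `(a, b)` of this set minimising `d` is a local minimum of `d` with radius `ν`, since
every pair within `ν` of `(a, b)` that is closer together is reached by one more step as well.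
Its value `d(a, b) ≤ d(x, y) < r` must therefore be at most `c`.
-/

namespace Descends

variable {X : Type*} [MetricSpace X] {ν : ℝ}

lemma refl (x y : X) : Descends ν x y x y :=
  ⟨0, fun _ => x, fun _ => y, rfl, rfl, rfl, rfl, Fin.elim0, Fin.elim0, fun _ => le_rfl⟩

lemma dist_le {x y u v : X} (h : Descends ν x y u v) : dist u v ≤ dist x y := by
  obtain ⟨p, f, g, -, -, rfl, rfl, -, -, hfg⟩ := h
  exact hfg (Fin.last p)

lemma snoc_chain {p : ℕ} {f : Fin (p + 1) → X}
    (hf : ∀ i : Fin p, dist (f i.castSucc) (f i.succ) < ν) {z : X}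
    (hz : dist (f (Fin.last p)) z < ν) (i : Fin (p + 1)) :
    dist (Fin.snoc (α := fun _ => X) f z i.castSucc)
      (Fin.snoc (α := fun _ => X) f z i.succ) < ν := by
  induction i using Fin.lastCases with
  | last => simpa only [Fin.snoc_castSucc, Fin.succ_last, Fin.snoc_last] using hz
  | cast j => simpa only [Fin.snoc_castSucc, Fin.succ_castSucc] using hf j

lemma snoc {x y u v u' v' : X} (h : Descends ν x y u v) (hu : dist u u' < ν)
    (hv : dist v v' < ν) (hd : dist u' v' ≤ dist x y) : Descends ν x y u' v' := by
  obtain ⟨p, f, g, rfl, rfl, rfl, rfl, hf, hg, hfg⟩ := h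
  refine ⟨p + 1, Fin.snoc f u', Fin.snoc g v', ?_, ?_, Fin.snoc_last .., Fin.snoc_last ..,
    snoc_chain hf hu, snoc_chain hg hv, fun i => ?_⟩
  · exact Fin.snoc_castSucc (i := 0) ..
  · exact Fin.snoc_castSucc (i := 0) ..
  · induction i using Fin.lastCases with
    | last => simpa only [Fin.snoc_last] using hd
    | cast j => simpa only [Fin.snoc_castSucc] using hfg j

lemma isClosed_setOf (hν : 0 < ν) (x y : X) :
    IsClosed {q : X × X | Descends ν x y q.1 q.2} := by
  refine isClosed_iff_clusterPt.2 fun q hq => ?_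
  have hle : dist q.1 q.2 ≤ dist x y :=
    (isClosed_le continuous_dist (continuous_const (y := dist x y))).closure_subset_iff.2
      (fun _ h => dist_le h) (mem_closure_iff_clusterPt.2 hq)
  obtain ⟨w, hw, hwq⟩ := Metric.mem_closure_iff.1 (mem_closure_iff_clusterPt.2 hq) ν hν
  rw [dist_comm, Prod.dist_eq, max_lt_iff] at hwq
  exact hw.snoc hwq.1 hwq.2 hle

end Descends

lemma exists_descends_isMinOn {X : Type*} [MetricSpace X] [CompactSpace X] {ν : ℝ}
    (hν : 0 < ν) (x y : X) :
    ∃ a b : X, Descends ν x y a b ∧ ∀ u v, Descends ν x y u v → dist a b ≤ dist u v := by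
  obtain ⟨⟨a, b⟩, hab, hmin⟩ := (Descends.isClosed_setOf hν x y).isCompact.exists_isMinOn
    ⟨(x, y), Descends.refl x y⟩ continuous_dist.continuousOn
  exact ⟨a, b, hab, fun u v huv => hmin (a := (u, v)) huv⟩

lemma isLocMinVal_of_descends_isMinOn {X : Type*} [MetricSpace X] {ν : ℝ} (hν : 0 < ν)
    {x y a b : X} (hab : Descends ν x y a b)
    (hmin : ∀ u v, Descends ν x y u v → dist a b ≤ dist u v) :
    IsLocMinVal X (dist a b) := by
  refine ⟨a, b, rfl, ν, hν, fun a' b' ha hb => ?_⟩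
  by_contra! hlt
  exact (hmin a' b' (hab.snoc ha hb (hlt.le.trans hab.dist_le))).not_gt hlt

theorem stmt_4_general {X : Type*} [MetricSpace X] [CompactSpace X] (r : ℝ)
    (x y : X) (hxy : dist x y < r) (ν : ℝ) (hν0 : 0 < ν)
    (c : ℝ)
    (honly : ∀ m : ℝ, c < m → m < r → ¬ IsLocMinVal X m) :
    ∃ x' y' : X, Descends ν x y x' y' ∧ dist x' y' ≤ c := by
  obtain ⟨a, b, hab, hmin⟩ := exists_descends_isMinOn hν0 x y
  refine ⟨a, b, hab, le_of_not_gt fun hc => ?_⟩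
  exact honly _ hc (hab.dist_le.trans_lt hxy) (isLocMinVal_of_descends_isMinOn hν0 hab hmin)

/-- Descending Lemma, part 1a: if `c > 0` is the only local minimum value
of `d` in `[c, r)`, then any pair at distance `< r` ν-descends (for `0 < ν < r - d(x,y)`)
to a pair at distance at most `c`. -/
theorem stmt_4 {X : Type*} [MetricSpace X] [CompactSpace X] (r : ℝ) (hr : 0 < r)
    (x y : X) (hxy : dist x y < r) (ν : ℝ) (hν0 : 0 < ν) (hν : ν < r - dist x y)
    (c : ℝ) (hc0 : 0 < c) (hc : IsLocMinVal X c)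
    (honly : ∀ m : ℝ, c < m → m < r → ¬ IsLocMinVal X m) :
    ∃ x' y' : X, Descends ν x y x' y' ∧ dist x' y' ≤ c :=
  stmt_4_general r x y hxy ν hν0 c honly
end

section
/- Let (X,d) be a compact metric space, r > 0, and a ≥ 0. Suppose d has no local minimum value in the open interval (a, r). Then for every ε > 0 and every pair x, y ∈ X with d(x,y) < r, choosing ν with 0 < ν < min(ε, r − d(x,y)), the pair (x,y) ν-descends to a pair (x', y') with d(x', y') ≤ a + ε. -/
lemma descends_self {X : Type*} [MetricSpace X] (ν : ℝ) (x y : X) :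
    Descends ν x y x y := by
  refine ⟨0, fun _ => x, fun _ => y, rfl, rfl, rfl, rfl, ?_, ?_, ?_⟩
  · intro i; exact i.elim0
  · intro i; exact i.elim0
  · intro i; exact le_refl _

lemma descends_snoc {X : Type*} [MetricSpace X] {ν : ℝ} {x y u v u' v' : X}
    (h : Descends ν x y u v) (hu : dist u u' < ν) (hv : dist v v' < ν)
    (hd : dist u' v' ≤ dist x y) : Descends ν x y u' v' := by
  obtain ⟨p, f, g, hf0, hg0, hfl, hgl, hfs, hgs, hdd⟩ := h
  refine ⟨p + 1, Fin.snoc f u', Fin.snoc g v', ?_, ?_, ?_, ?_, ?_, ?_, ?_⟩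
  · rw [← Fin.castSucc_zero, Fin.snoc_castSucc]; exact hf0
  · rw [← Fin.castSucc_zero, Fin.snoc_castSucc]; exact hg0
  · simp
  · simp
  · intro i
    refine Fin.lastCases ?_ ?_ i
    · rw [Fin.succ_last, Fin.snoc_last, Fin.snoc_castSucc, hfl]; exact hu
    · intro j
      rw [Fin.succ_castSucc, Fin.snoc_castSucc, Fin.snoc_castSucc]
      exact hfs j
  · intro i
    refine Fin.lastCases ?_ ?_ i
    · rw [Fin.succ_last, Fin.snoc_last, Fin.snoc_castSucc, hgl]; exact hv
    · intro j
      rw [Fin.succ_castSucc, Fin.snoc_castSucc, Fin.snoc_castSucc]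
      exact hgs j
  · intro i
    refine Fin.lastCases ?_ ?_ i
    · rw [Fin.snoc_last, Fin.snoc_last]; exact hd
    · intro j
      rw [Fin.snoc_castSucc, Fin.snoc_castSucc]
      exact hdd j

/-- Descending Lemma, part 2a: if `d` has no local minimum value in
`(a, r)`, then every pair at distance `< r` ν-descends (for `0 < ν < min ε (r - d(x,y))`)
to a pair at distance at most `a + ε`. -/
theorem stmt_5 {X : Type*} [MetricSpace X] [CompactSpace X] (r : ℝ) (hr : 0 < r)
    (a : ℝ) (ha : 0 ≤ a) (hnone : ∀ m ∈ Set.Ioo a r, ¬ IsLocMinVal X m) :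
    ∀ ε > (0 : ℝ), ∀ x y : X, dist x y < r → ∀ ν : ℝ, 0 < ν →
      ν < min ε (r - dist x y) →
      ∃ x' y' : X, Descends ν x y x' y' ∧ dist x' y' ≤ a + ε := by
  intro ε hε x y hxy ν hν hνlt
  by_contra hcon
  push_neg at hcon
  set S : Set (X × X) := {p | Descends ν x y p.1 p.2} with hS
  have hxyS : (x, y) ∈ S := descends_self ν x y
  have hSne : S.Nonempty := ⟨(x, y), hxyS⟩
  have hSbig : ∀ w ∈ S, a + ε ≤ dist w.1 w.2 := fun w hw =>
    (hcon w.1 w.2 hw).le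
  -- the closure of S is compact and the distance attains a minimum on it
  have hclc : IsCompact (closure S) := isClosed_closure.isCompact
  have hcont : Continuous fun w : X × X => dist w.1 w.2 := continuous_dist
  obtain ⟨z, hz, hzmin⟩ := hclc.exists_isMinOn hSne.closure hcont.continuousOn
  have hzmin' : ∀ w ∈ closure S, dist z.1 z.2 ≤ dist w.1 w.2 := fun w hw => hzmin hw
  set m : ℝ := dist z.1 z.2 with hm
  -- a + ε ≤ m since closure S ⊆ {w | a + ε ≤ dist w.1 w.2}
  have hclosed : IsClosed {w : X × X | a + ε ≤ dist w.1 w.2} :=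
    isClosed_le continuous_const hcont
  have haεm : a + ε ≤ m := closure_minimal hSbig hclosed hz
  have hmxy : m ≤ dist x y := hzmin' (x, y) (subset_closure hxyS)
  have hmIoo : m ∈ Set.Ioo a r :=
    ⟨lt_of_lt_of_le (by linarith) haεm, lt_of_le_of_lt hmxy hxy⟩
  refine hnone m hmIoo ⟨z.1, z.2, rfl, ν / 2, by linarith, ?_⟩
  intro u v hu hv
  by_contra hlt
  push_neg at hlt
  -- pick a point of S within ν/2 of z
  obtain ⟨w, hwS, hwz⟩ := Metric.mem_closure_iff.mp hz (ν / 2) (by linarith)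
  have hw1 : dist z.1 w.1 < ν / 2 :=
    lt_of_le_of_lt (le_max_left _ _ |>.trans_eq (Prod.dist_eq (x := z) (y := w)).symm) hwz
  have hw2 : dist z.2 w.2 < ν / 2 :=
    lt_of_le_of_lt (le_max_right _ _ |>.trans_eq (Prod.dist_eq (x := z) (y := w)).symm) hwz
  have h1 : dist w.1 u < ν := by
    calc dist w.1 u ≤ dist w.1 z.1 + dist z.1 u := dist_triangle _ _ _
    _ < ν := by rw [dist_comm w.1 z.1]; linarith
  have h2 : dist w.2 v < ν := by
    calc dist w.2 v ≤ dist w.2 z.2 + dist z.2 v := dist_triangle _ _ _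
    _ < ν := by rw [dist_comm w.2 z.2]; linarith
  have huvS : (u, v) ∈ S :=
    descends_snoc hwS h1 h2 (le_trans hlt.le hmxy)
  exact absurd (hzmin' (u, v) (subset_closure huvS)) (not_le.mpr hlt)
end
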